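/- arXiv:1705.10745 — 5 statements merged into one kernel-verified Lean document; each statement's English description precedes it below -/
import Mathlib

section
/- Let H = H_K ⊕ H_M be an orthogonal decomposition of a Hilbert space H with orthogonal projections P_K, P_M, and for i = 1,2 let Φᵢ : H → ℓ²(Iᵢ) be the analysis operator of a Parseval frame (a linear isometry into ℓ²) such that every coefficient sequence Φᵢ z appearing below is absolutely summable. Let x⁰ = x₁⁰ + x₂⁰ ∈ H, let δ ≥ 0, and let Λ₁ ⊆ I₁, Λ₂ ⊆ I₂ satisfy the δ-sparsity condition ‖𝟙_{Λ₁ᶜ}Φ₁x₁⁰‖₁ + ‖𝟙_{Λ₂ᶜ}Φ₂x₂⁰‖₁ ≤ δ. Let 0 ≤ κ < 1/2 be a joint-concentration constant, i.e. for all x ∈ H and all y ∈ H_M: ‖𝟙_{Λ₁}Φ₁(y + P_K x)‖₁ + ‖𝟙_{Λ₂}Φ₂ x‖₁ ≤ κ(‖Φ₁(y + P_K x)‖₁ + ‖Φ₂ x‖₁). Suppose (x₁⋆, x₂⋆) is a minimizer of ‖Φ₁x₁‖₁ + ‖Φ₂x₂‖₁ over all pairs (x₁, x₂) ∈ H ×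 H satisfying P_K(x₁ + x₂) = P_K x⁰, i.e. P_K(x₁⋆ + x₂⋆) = P_K x⁰ and ‖Φ₁x₁⋆‖₁ + ‖Φ₂x₂⋆‖₁ ≤ ‖Φ₁x₁‖₁ + ‖Φ₂x₂‖₁ for every such pair. Then ‖x₁⋆ − x₁⁰‖₂ + ‖x₂⋆ − x₂⁰‖₂ ≤ 2δ/(1 − 2κ). -/
private lemma l2_norm_le_l1 {𝕜 : Type*} [RCLike 𝕜] {I : Type*}
    (f : lp (fun _ : I => 𝕜) 2) (hf : Summable fun j => ‖(f : ∀ _ : I, 𝕜) j‖) :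
    ‖f‖ ≤ ∑' j, ‖(f : ∀ _ : I, 𝕜) j‖ := by
  set S := ∑' j, ‖(f : ∀ _ : I, 𝕜) j‖ with hSdef
  have hS0 : 0 ≤ S := tsum_nonneg fun j => norm_nonneg _
  have hle : ∀ j, ‖(f : ∀ _ : I, 𝕜) j‖ ≤ S := fun j =>
    hf.le_tsum j fun _ _ => norm_nonneg _
  have hsq : Summable fun j => ‖(f : ∀ _ : I, 𝕜) j‖ ^ 2 := by
    refine Summable.of_nonneg_of_le (fun j => sq_nonneg _) (fun j => ?_) (hf.mul_left S)
    have := hle j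
    have h0 := norm_nonneg ((f : ∀ _ : I, 𝕜) j)
    nlinarith
  have h2 : ‖f‖ ^ (2 : ℝ) = ∑' j, ‖(f : ∀ _ : I, 𝕜) j‖ ^ (2 : ℝ) := by
    have := lp.norm_rpow_eq_tsum (p := 2) (by norm_num) f
    simpa using this
  have h2' : ‖f‖ ^ 2 = ∑' j, ‖(f : ∀ _ : I, 𝕜) j‖ ^ 2 := by
    have e1 : ‖f‖ ^ (2 : ℝ) = ‖f‖ ^ 2 := by
      rw [show (2:ℝ) = ((2:ℕ):ℝ) by norm_num, Real.rpow_natCast]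
    have e2 : ∀ j, ‖(f : ∀ _ : I, 𝕜) j‖ ^ (2 : ℝ) = ‖(f : ∀ _ : I, 𝕜) j‖ ^ 2 := fun j => by
      rw [show (2:ℝ) = ((2:ℕ):ℝ) by norm_num, Real.rpow_natCast]
    rw [← e1, h2]
    exact tsum_congr e2
  have hbound : ∑' j, ‖(f : ∀ _ : I, 𝕜) j‖ ^ 2 ≤ S * S := by
    have h1 : ∑' j, ‖(f : ∀ _ : I, 𝕜) j‖ ^ 2 ≤ ∑' j, S * ‖(f : ∀ _ : I, 𝕜) j‖ := by
      refine Summable.tsum_le_tsum (fun j => ?_) hsq (hf.mul_left S)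
      have := hle j
      have h0 := norm_nonneg ((f : ∀ _ : I, 𝕜) j)
      nlinarith
    calc ∑' j, ‖(f : ∀ _ : I, 𝕜) j‖ ^ 2 ≤ ∑' j, S * ‖(f : ∀ _ : I, 𝕜) j‖ := h1
      _ = S * S := by rw [tsum_mul_left]
  have hfin : ‖f‖ ^ 2 ≤ S ^ 2 := by rw [h2']; nlinarith
  nlinarith [norm_nonneg f]

private lemma hsplit {I : Type*} (Λ : Set I) (f : I → ℝ) (hf : Summable f) :
    (∑' j : Λ, f j) + (∑' j : ↥Λᶜ, f j) = ∑' j, f j :=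
  Summable.tsum_add_tsum_compl (hf.subtype Λ) (hf.subtype Λᶜ)

private lemma tsum_sub_le_subtype {I : Type*} (Λ : Set I) (a b c : I → ℝ)
    (ha : Summable a) (hb : Summable b) (hc : Summable c)
    (h : ∀ j, b j - c j ≤ a j) :
    (∑' j : Λ, b j) - (∑' j : Λ, c j) ≤ ∑' j : Λ, a j := by
  have hb' := hb.subtype Λ
  have hc' := hc.subtype Λ
  have h1 : ∑' j : Λ, (b j - c j) ≤ ∑' j : Λ, a j :=
    Summable.tsum_le_tsum (fun j => h j) (hb'.sub hc') (ha.subtype Λ)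
  have heq : ∑' j : Λ, (b j - c j) = (∑' j : Λ, b j) - ∑' j : Λ, c j := Summable.tsum_sub hb' hc'
  linarith

/-- **Theorem 1 (data completion via geometric separation).**
`H = H_K ⊕ H_M` is encoded by a closed subspace `K` of a Hilbert space `H`
(with `H_M = Kᗮ`); `P_K`, `P_M` are the orthogonal projections.  `Φ₁`, `Φ₂`
are analysis operators of Parseval frames (linear isometries into `ℓ²`),
whose coefficient sequences are absolutely summable.  Under δ-sparsity and
joint concentration `κ < 1/2`, any minimizer `(x₁⋆, x₂⋆)` of the ℓ¹-analysis
problem satisfies `‖x₁⋆ − x₁₀‖ + ‖x₂⋆ − x₂₀‖ ≤ 2δ/(1 − 2κ)`. -/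
theorem data_completion_via_geometric_separation
    {𝕜 : Type*} [RCLike 𝕜]
    {H : Type*} [NormedAddCommGroup H] [InnerProductSpace 𝕜 H] [CompleteSpace H]
    (K : Submodule 𝕜 H) [CompleteSpace K]
    {I₁ I₂ : Type*}
    (Φ₁ : H →ₗᵢ[𝕜] lp (fun _ : I₁ => 𝕜) 2)
    (Φ₂ : H →ₗᵢ[𝕜] lp (fun _ : I₂ => 𝕜) 2)
    (hsum₁ : ∀ z : H, Summable fun j : I₁ => ‖(Φ₁ z : ∀ _ : I₁, 𝕜) j‖)
    (hsum₂ : ∀ z : H, Summable fun j : I₂ => ‖(Φ₂ z : ∀ _ : I₂, 𝕜) j‖)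
    (x₀ x₁₀ x₂₀ : H) (hx : x₀ = x₁₀ + x₂₀)
    (δ : ℝ) (hδ : 0 ≤ δ)
    (Λ₁ : Set I₁) (Λ₂ : Set I₂)
    (hsparse :
      (∑' j : ↥Λ₁ᶜ, ‖(Φ₁ x₁₀ : ∀ _ : I₁, 𝕜) j‖)
        + (∑' j : ↥Λ₂ᶜ, ‖(Φ₂ x₂₀ : ∀ _ : I₂, 𝕜) j‖) ≤ δ)
    (κ : ℝ) (hκ0 : 0 ≤ κ) (hκ : κ < 1 / 2)
    (hconc : ∀ x : H, ∀ y ∈ Kᗮ,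
      (∑' j : Λ₁, ‖(Φ₁ (y + (K.orthogonalProjectionOnto x : H)) : ∀ _ : I₁, 𝕜) j‖)
          + (∑' j : Λ₂, ‖(Φ₂ x : ∀ _ : I₂, 𝕜) j‖)
        ≤ κ * ((∑' j : I₁, ‖(Φ₁ (y + (K.orthogonalProjectionOnto x : H)) : ∀ _ : I₁, 𝕜) j‖)
          + (∑' j : I₂, ‖(Φ₂ x : ∀ _ : I₂, 𝕜) j‖)))
    (x₁s x₂s : H)
    (hfeas : (K.orthogonalProjectionOnto (x₁s + x₂s) : H) = (K.orthogonalProjectionOnto x₀ : H))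
    (hmin : ∀ x₁ x₂ : H,
      (K.orthogonalProjectionOnto (x₁ + x₂) : H) = (K.orthogonalProjectionOnto x₀ : H) →
      (∑' j : I₁, ‖(Φ₁ x₁s : ∀ _ : I₁, 𝕜) j‖) + (∑' j : I₂, ‖(Φ₂ x₂s : ∀ _ : I₂, 𝕜) j‖)
        ≤ (∑' j : I₁, ‖(Φ₁ x₁ : ∀ _ : I₁, 𝕜) j‖) + (∑' j : I₂, ‖(Φ₂ x₂ : ∀ _ : I₂, 𝕜) j‖)) :
    ‖x₁s - x₁₀‖ + ‖x₂s - x₂₀‖ ≤ 2 * δ / (1 - 2 * κ) := by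
  set h₁ : H := x₁s - x₁₀ with hh₁
  set h₂ : H := x₂s - x₂₀ with hh₂
  -- abbreviations for the sequences of norms
  set a₁ : I₁ → ℝ := fun j => ‖(Φ₁ h₁ : ∀ _ : I₁, 𝕜) j‖ with ha₁def
  set a₂ : I₂ → ℝ := fun j => ‖(Φ₂ h₂ : ∀ _ : I₂, 𝕜) j‖ with ha₂def
  set b₁ : I₁ → ℝ := fun j => ‖(Φ₁ x₁₀ : ∀ _ : I₁, 𝕜) j‖ with hb₁def
  set b₂ : I₂ → ℝ := fun j => ‖(Φ₂ x₂₀ : ∀ _ : I₂, 𝕜) j‖ with hb₂def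
  set c₁ : I₁ → ℝ := fun j => ‖(Φ₁ x₁s : ∀ _ : I₁, 𝕜) j‖ with hc₁def
  set c₂ : I₂ → ℝ := fun j => ‖(Φ₂ x₂s : ∀ _ : I₂, 𝕜) j‖ with hc₂def
  have hsa₁ : Summable a₁ := hsum₁ h₁
  have hsa₂ : Summable a₂ := hsum₂ h₂
  have hsb₁ : Summable b₁ := hsum₁ x₁₀
  have hsb₂ : Summable b₂ := hsum₂ x₂₀
  have hsc₁ : Summable c₁ := hsum₁ x₁s
  have hsc₂ : Summable c₂ := hsum₂ x₂s
  -- pointwise decomposition of the minimizer coefficients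
  have hpt₁ : ∀ j : I₁, (Φ₁ x₁s : ∀ _ : I₁, 𝕜) j = (Φ₁ h₁ : ∀ _ : I₁, 𝕜) j + (Φ₁ x₁₀ : ∀ _ : I₁, 𝕜) j := by
    intro j
    have : Φ₁ x₁s = Φ₁ h₁ + Φ₁ x₁₀ := by
      rw [← map_add]; congr 1; rw [hh₁]; abel
    rw [this, lp.coeFn_add]; rfl
  have hpt₂ : ∀ j : I₂, (Φ₂ x₂s : ∀ _ : I₂, 𝕜) j = (Φ₂ h₂ : ∀ _ : I₂, 𝕜) j + (Φ₂ x₂₀ : ∀ _ : I₂, 𝕜) j := by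
    intro j
    have : Φ₂ x₂s = Φ₂ h₂ + Φ₂ x₂₀ := by
      rw [← map_add]; congr 1; rw [hh₂]; abel
    rw [this, lp.coeFn_add]; rfl
  -- triangle inequalities pointwise
  have tri_aux : ∀ {E : Type _} [NormedAddCommGroup E] (u v : E),
      ‖v‖ - ‖u‖ ≤ ‖u + v‖ ∧ ‖u‖ - ‖v‖ ≤ ‖u + v‖ := by
    intro E _ u v
    constructor
    · have := norm_sub_le (u + v) u
      simp only [add_sub_cancel_left] at this
      linarith
    · have := norm_sub_le (u + v) v
      simp only [add_sub_cancel_right] at this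
      linarith
  have htri₁Λ : ∀ j : I₁, b₁ j - a₁ j ≤ c₁ j := by
    intro j
    simp only [hc₁def, ha₁def, hb₁def, hpt₁ j]
    exact (tri_aux _ _).1
  have htri₁c : ∀ j : I₁, a₁ j - b₁ j ≤ c₁ j := by
    intro j
    simp only [hc₁def, ha₁def, hb₁def, hpt₁ j]
    exact (tri_aux _ _).2
  have htri₂Λ : ∀ j : I₂, b₂ j - a₂ j ≤ c₂ j := by
    intro j
    simp only [hc₂def, ha₂def, hb₂def, hpt₂ j]
    exact (tri_aux _ _).1
  have htri₂c : ∀ j : I₂, a₂ j - b₂ j ≤ c₂ j := by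
    intro j
    simp only [hc₂def, ha₂def, hb₂def, hpt₂ j]
    exact (tri_aux _ _).2
  -- minimality at the true decomposition
  have hminineq : (∑' j, c₁ j) + (∑' j, c₂ j) ≤ (∑' j, b₁ j) + (∑' j, b₂ j) := by
    refine hmin x₁₀ x₂₀ ?_
    rw [← hx]
  -- lower bounds on the pieces of the minimizer sums
  have hlow₁Λ : (∑' j : Λ₁, b₁ j) - (∑' j : Λ₁, a₁ j) ≤ ∑' j : Λ₁, c₁ j :=
    tsum_sub_le_subtype Λ₁ c₁ b₁ a₁ hsc₁ hsb₁ hsa₁ htri₁Λ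
  have hlow₁c : (∑' j : ↥Λ₁ᶜ, a₁ j) - (∑' j : ↥Λ₁ᶜ, b₁ j) ≤ ∑' j : ↥Λ₁ᶜ, c₁ j :=
    tsum_sub_le_subtype Λ₁ᶜ c₁ a₁ b₁ hsc₁ hsa₁ hsb₁ htri₁c
  have hlow₂Λ : (∑' j : Λ₂, b₂ j) - (∑' j : Λ₂, a₂ j) ≤ ∑' j : Λ₂, c₂ j :=
    tsum_sub_le_subtype Λ₂ c₂ b₂ a₂ hsc₂ hsb₂ hsa₂ htri₂Λ
  have hlow₂c : (∑' j : ↥Λ₂ᶜ, a₂ j) - (∑' j : ↥Λ₂ᶜ, b₂ j) ≤ ∑' j : ↥Λ₂ᶜ, c₂ j :=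
    tsum_sub_le_subtype Λ₂ᶜ c₂ a₂ b₂ hsc₂ hsa₂ hsb₂ htri₂c
  have hsplita₁ := hsplit Λ₁ a₁ hsa₁
  have hsplita₂ := hsplit Λ₂ a₂ hsa₂
  have hsplitb₁ := hsplit Λ₁ b₁ hsb₁
  have hsplitb₂ := hsplit Λ₂ b₂ hsb₂
  have hsplitc₁ := hsplit Λ₁ c₁ hsc₁
  have hsplitc₂ := hsplit Λ₂ c₂ hsc₂
  -- key inequality: T ≤ S + 2δ
  have hkey : (∑' j : ↥Λ₁ᶜ, a₁ j) + (∑' j : ↥Λ₂ᶜ, a₂ j)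
      ≤ (∑' j : Λ₁, a₁ j) + (∑' j : Λ₂, a₂ j) + 2 * δ := by
    linarith
  -- concentration applied to (h₁, h₂)
  have hproj0 : K.orthogonalProjectionOnto (h₁ + h₂) = 0 := by
    have he : h₁ + h₂ = (x₁s + x₂s) - x₀ := by rw [hx, hh₁, hh₂]; abel
    rw [he, map_sub, sub_eq_zero]
    exact Subtype.coe_injective hfeas
  have hy : h₁ + (K.orthogonalProjectionOnto h₂ : H) ∈ Kᗮ := by
    rw [← Submodule.orthogonalProjectionOnto_eq_zero_iff]
    have : K.orthogonalProjectionOnto (h₁ + (K.orthogonalProjectionOnto h₂ : H))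
        = K.orthogonalProjectionOnto h₁ + K.orthogonalProjectionOnto h₂ := by
      rw [map_add, Submodule.orthogonalProjectionOnto_mem_subspace_eq_self]
    rw [this, ← map_add, hproj0]
  have harg : h₁ + (K.orthogonalProjectionOnto h₂ : H) + (K.orthogonalProjectionOnto (-h₂) : H) = h₁ := by
    rw [map_neg]
    push_cast
    abel
  have hconc' := hconc (-h₂) (h₁ + (K.orthogonalProjectionOnto h₂ : H)) hy
  rw [harg] at hconc'
  have hneg : ∀ j : I₂, ‖(Φ₂ (-h₂) : ∀ _ : I₂, 𝕜) j‖ = a₂ j := by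
    intro j
    have : Φ₂ (-h₂) = -(Φ₂ h₂) := by rw [map_neg]
    rw [this, lp.coeFn_neg]
    simp [ha₂def]
  have hconcS : (∑' j : Λ₁, a₁ j) + (∑' j : Λ₂, a₂ j)
      ≤ κ * ((∑' j, a₁ j) + (∑' j, a₂ j)) := by
    have e1 : (∑' j : Λ₂, ‖(Φ₂ (-h₂) : ∀ _ : I₂, 𝕜) j‖) = ∑' j : Λ₂, a₂ j :=
      tsum_congr fun j => hneg j
    have e2 : (∑' j : I₂, ‖(Φ₂ (-h₂) : ∀ _ : I₂, 𝕜) j‖) = ∑' j, a₂ j :=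
      tsum_congr fun j => hneg j
    rw [e1, e2] at hconc'
    exact hconc'
  -- combine: (1 - 2κ) * A ≤ 2δ
  have hApos : 0 ≤ (∑' j, a₁ j) + (∑' j, a₂ j) :=
    add_nonneg (tsum_nonneg fun j => norm_nonneg _) (tsum_nonneg fun j => norm_nonneg _)
  have hden : 0 < 1 - 2 * κ := by linarith
  have hA : (∑' j, a₁ j) + (∑' j, a₂ j) ≤ 2 * δ / (1 - 2 * κ) := by
    rw [le_div_iff₀ hden]
    have expand : ((∑' j, a₁ j) + (∑' j, a₂ j)) * (1 - 2 * κ)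
        = ((∑' j, a₁ j) + (∑' j, a₂ j)) - 2 * (κ * ((∑' j, a₁ j) + (∑' j, a₂ j))) := by ring
    rw [expand]
    linarith
  -- ℓ² ≤ ℓ¹ and the isometry property
  have hn₁ : ‖h₁‖ ≤ ∑' j, a₁ j := by
    rw [← Φ₁.norm_map h₁]
    exact l2_norm_le_l1 (Φ₁ h₁) hsa₁
  have hn₂ : ‖h₂‖ ≤ ∑' j, a₂ j := by
    rw [← Φ₂.norm_map h₂]
    exact l2_norm_le_l1 (Φ₂ h₂) hsa₂
  calc ‖x₁s - x₁₀‖ + ‖x₂s - x₂₀‖ = ‖h₁‖ + ‖h₂‖ := by rw [hh₁, hh₂]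
    _ ≤ (∑' j, a₁ j) + (∑' j, a₂ j) := add_le_add hn₁ hn₂
    _ ≤ 2 * δ / (1 - 2 * κ) := hA
end

section
/- Let H = H_K ⊕ H_M be an orthogonal decomposition of a Hilbert space H with orthogonal projections P_K, P_M, and for i = 1,2 let Φᵢ : H → ℓ²(Iᵢ) be the analysis operator of a Parseval frame (a linear isometry into ℓ²) such that every coefficient sequence Φᵢ z appearing below is absolutely summable. Let x⁰ = x₁⁰ + x₂⁰ ∈ H, let δ ≥ 0, and let Λ₁ ⊆ I₁, Λ₂ ⊆ I₂ satisfy the δ-sparsity condition ‖𝟙_{Λ₁ᶜ}Φ₁x₁⁰‖₁ + ‖𝟙_{Λ₂ᶜ}Φ₂x₂⁰‖₁ ≤ δ. Let 0 ≤ κ < 1/2 be a joint-concentration constant, i.e. for all x ∈ H and all y ∈ H_M: ‖𝟙_{Λ₁}Φ₁(y + P_K x)‖₁ + ‖𝟙_{Λ₂}Φ₂ x‖₁ ≤ κ(‖Φ₁(y + P_K x)‖₁ + ‖Φ₂ x‖₁). Suppose (x₁⋆, x₂⋆) is a minimizer of ‖Φ₁x₁‖₁ + ‖Φ₂x₂‖₁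 over all pairs (x₁, x₂) ∈ H × H satisfying P_K(x₁ + x₂) = P_K x⁰. Then the ℓ¹ coefficient error satisfies ‖Φ₁(x₁⋆ − x₁⁰)‖₁ + ‖Φ₂(x₂⋆ − x₂⁰)‖₁ ≤ 2δ/(1 − 2κ). -/
/-- Under δ-sparsity and joint concentration `κ < 1/2`, any minimizer of the
ℓ¹-analysis problem satisfies the ℓ¹ coefficient error bound
`‖Φ₁(x₁⋆ − x₁₀)‖₁ + ‖Φ₂(x₂⋆ − x₂₀)‖₁ ≤ 2δ/(1 − 2κ)`. -/
theorem coefficient_error_bound_of_minimizer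
    {𝕜 : Type*} [RCLike 𝕜]
    {H : Type*} [NormedAddCommGroup H] [InnerProductSpace 𝕜 H] [CompleteSpace H]
    (K : Submodule 𝕜 H) [CompleteSpace K]
    {I₁ I₂ : Type*}
    (Φ₁ : H →ₗᵢ[𝕜] lp (fun _ : I₁ => 𝕜) 2)
    (Φ₂ : H →ₗᵢ[𝕜] lp (fun _ : I₂ => 𝕜) 2)
    (hsum₁ : ∀ z : H, Summable fun j : I₁ => ‖(Φ₁ z : ∀ _ : I₁, 𝕜) j‖)
    (hsum₂ : ∀ z : H, Summable fun j : I₂ => ‖(Φ₂ z : ∀ _ : I₂, 𝕜) j‖)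
    (x₀ x₁₀ x₂₀ : H) (hx : x₀ = x₁₀ + x₂₀)
    (δ : ℝ) (hδ : 0 ≤ δ)
    (Λ₁ : Set I₁) (Λ₂ : Set I₂)
    (hsparse :
      (∑' j : ↥Λ₁ᶜ, ‖(Φ₁ x₁₀ : ∀ _ : I₁, 𝕜) j‖)
        + (∑' j : ↥Λ₂ᶜ, ‖(Φ₂ x₂₀ : ∀ _ : I₂, 𝕜) j‖) ≤ δ)
    (κ : ℝ) (hκ0 : 0 ≤ κ) (hκ : κ < 1 / 2)
    (hconc : ∀ x : H, ∀ y ∈ Kᗮ,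
      (∑' j : Λ₁, ‖(Φ₁ (y + (K.orthogonalProjectionOnto x : H)) : ∀ _ : I₁, 𝕜) j‖)
          + (∑' j : Λ₂, ‖(Φ₂ x : ∀ _ : I₂, 𝕜) j‖)
        ≤ κ * ((∑' j : I₁, ‖(Φ₁ (y + (K.orthogonalProjectionOnto x : H)) : ∀ _ : I₁, 𝕜) j‖)
          + (∑' j : I₂, ‖(Φ₂ x : ∀ _ : I₂, 𝕜) j‖)))
    (x₁s x₂s : H)
    (hfeas : (K.orthogonalProjectionOnto (x₁s + x₂s) : H) = (K.orthogonalProjectionOnto x₀ : H))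
    (hmin : ∀ x₁ x₂ : H,
      (K.orthogonalProjectionOnto (x₁ + x₂) : H) = (K.orthogonalProjectionOnto x₀ : H) →
      (∑' j : I₁, ‖(Φ₁ x₁s : ∀ _ : I₁, 𝕜) j‖) + (∑' j : I₂, ‖(Φ₂ x₂s : ∀ _ : I₂, 𝕜) j‖)
        ≤ (∑' j : I₁, ‖(Φ₁ x₁ : ∀ _ : I₁, 𝕜) j‖) + (∑' j : I₂, ‖(Φ₂ x₂ : ∀ _ : I₂, 𝕜) j‖)) :
    (∑' j : I₁, ‖(Φ₁ (x₁s - x₁₀) : ∀ _ : I₁, 𝕜) j‖)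
      + (∑' j : I₂, ‖(Φ₂ (x₂s - x₂₀) : ∀ _ : I₂, 𝕜) j‖) ≤ 2 * δ / (1 - 2 * κ) := by
  classical
  set h₁ := x₁s - x₁₀ with hh₁
  set h₂ := x₂s - x₂₀ with hh₂
  -- pointwise coefficient identities
  have coe1 : ∀ (z w : H) (j : I₁), (Φ₁ (z - w) : ∀ _ : I₁, 𝕜) j
      = (Φ₁ z : ∀ _ : I₁, 𝕜) j - (Φ₁ w : ∀ _ : I₁, 𝕜) j := by
    intro z w j
    rw [map_sub, lp.coeFn_sub, Pi.sub_apply]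
  have coe2 : ∀ (z w : H) (j : I₂), (Φ₂ (z - w) : ∀ _ : I₂, 𝕜) j
      = (Φ₂ z : ∀ _ : I₂, 𝕜) j - (Φ₂ w : ∀ _ : I₂, 𝕜) j := by
    intro z w j
    rw [map_sub, lp.coeFn_sub, Pi.sub_apply]
  -- summability of restrictions
  have S1 : ∀ (z : H) (s : Set I₁), Summable (fun j : s => ‖(Φ₁ z : ∀ _ : I₁, 𝕜) j‖) :=
    fun z s => (hsum₁ z).subtype s
  have S2 : ∀ (z : H) (s : Set I₂), Summable (fun j : s => ‖(Φ₂ z : ∀ _ : I₂, 𝕜) j‖) :=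
    fun z s => (hsum₂ z).subtype s
  -- splits
  have split1 : ∀ z : H, (∑' j : Λ₁, ‖(Φ₁ z : ∀ _ : I₁, 𝕜) j‖)
      + (∑' j : ↥Λ₁ᶜ, ‖(Φ₁ z : ∀ _ : I₁, 𝕜) j‖) = ∑' j : I₁, ‖(Φ₁ z : ∀ _ : I₁, 𝕜) j‖ :=
    fun z => (hsum₁ z).tsum_subtype_add_tsum_subtype_compl Λ₁
  have split2 : ∀ z : H, (∑' j : Λ₂, ‖(Φ₂ z : ∀ _ : I₂, 𝕜) j‖)
      + (∑' j : ↥Λ₂ᶜ, ‖(Φ₂ z : ∀ _ : I₂, 𝕜) j‖) = ∑' j : I₂, ‖(Φ₂ z : ∀ _ : I₂, 𝕜) j‖ :=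
    fun z => (hsum₂ z).tsum_subtype_add_tsum_subtype_compl Λ₂
  -- feasibility of (x₁₀, x₂₀) and minimality
  have hfeas0 : (K.orthogonalProjectionOnto (x₁₀ + x₂₀) : H) = (K.orthogonalProjectionOnto x₀ : H) := by
    rw [← hx]
  have hmin' := hmin x₁₀ x₂₀ hfeas0
  -- h₁ + h₂ has zero projection
  have hP : (K.orthogonalProjectionOnto (h₁ + h₂) : H) = 0 := by
    have e : h₁ + h₂ = (x₁s + x₂s) - (x₁₀ + x₂₀) := by rw [hh₁, hh₂]; abel
    rw [e, map_sub, Submodule.coe_sub, hfeas, hfeas0, sub_self]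
  -- the vector y = h₁ + P h₂ lies in Kᗮ
  have hy : h₁ + (K.orthogonalProjectionOnto h₂ : H) ∈ Kᗮ := by
    rw [← Submodule.orthogonalProjectionOnto_eq_zero_iff]
    have : K.orthogonalProjectionOnto (h₁ + (K.orthogonalProjectionOnto h₂ : H))
        = K.orthogonalProjectionOnto (h₁ + h₂) := by
      rw [map_add, map_add, Submodule.orthogonalProjectionOnto_mem_subspace_eq_self]
    rw [this]
    exact Subtype.coe_injective (by simpa using hP)
  -- apply the concentration hypothesis with x = -h₂
  have hc := hconc (-h₂) (h₁ + (K.orthogonalProjectionOnto h₂ : H)) hy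
  have hxy : (h₁ + (K.orthogonalProjectionOnto h₂ : H)) + (K.orthogonalProjectionOnto (-h₂) : H) = h₁ := by
    rw [map_neg, Submodule.coe_neg]; abel
  rw [hxy] at hc
  have hneg : ∀ j : I₂, ‖(Φ₂ (-h₂) : ∀ _ : I₂, 𝕜) j‖ = ‖(Φ₂ h₂ : ∀ _ : I₂, 𝕜) j‖ := by
    intro j
    rw [map_neg, lp.coeFn_neg, Pi.neg_apply, norm_neg]
  rw [tsum_congr (fun j : Λ₂ => hneg j), tsum_congr (fun j : I₂ => hneg j)] at hc
  -- triangle inequalities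
  have α1 : (∑' j : ↥Λ₁ᶜ, ‖(Φ₁ h₁ : ∀ _ : I₁, 𝕜) j‖)
      ≤ (∑' j : ↥Λ₁ᶜ, ‖(Φ₁ x₁s : ∀ _ : I₁, 𝕜) j‖)
        + (∑' j : ↥Λ₁ᶜ, ‖(Φ₁ x₁₀ : ∀ _ : I₁, 𝕜) j‖) := by
    rw [← Summable.tsum_add (S1 x₁s _) (S1 x₁₀ _)]
    refine Summable.tsum_le_tsum (fun j => ?_) (S1 h₁ _) ((S1 x₁s _).add (S1 x₁₀ _))
    rw [hh₁, coe1 x₁s x₁₀ j]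
    exact norm_sub_le _ _
  have α2 : (∑' j : ↥Λ₂ᶜ, ‖(Φ₂ h₂ : ∀ _ : I₂, 𝕜) j‖)
      ≤ (∑' j : ↥Λ₂ᶜ, ‖(Φ₂ x₂s : ∀ _ : I₂, 𝕜) j‖)
        + (∑' j : ↥Λ₂ᶜ, ‖(Φ₂ x₂₀ : ∀ _ : I₂, 𝕜) j‖) := by
    rw [← Summable.tsum_add (S2 x₂s _) (S2 x₂₀ _)]
    refine Summable.tsum_le_tsum (fun j => ?_) (S2 h₂ _) ((S2 x₂s _).add (S2 x₂₀ _))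
    rw [hh₂, coe2 x₂s x₂₀ j]
    exact norm_sub_le _ _
  have e10 : x₁₀ = x₁s - h₁ := by rw [hh₁]; abel
  have e20 : x₂₀ = x₂s - h₂ := by rw [hh₂]; abel
  have β1 : (∑' j : Λ₁, ‖(Φ₁ x₁₀ : ∀ _ : I₁, 𝕜) j‖)
      ≤ (∑' j : Λ₁, ‖(Φ₁ x₁s : ∀ _ : I₁, 𝕜) j‖)
        + (∑' j : Λ₁, ‖(Φ₁ h₁ : ∀ _ : I₁, 𝕜) j‖) := by
    rw [← Summable.tsum_add (S1 x₁s _) (S1 h₁ _)]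
    refine Summable.tsum_le_tsum (fun j => ?_) (S1 x₁₀ _) ((S1 x₁s _).add (S1 h₁ _))
    rw [e10, coe1 x₁s h₁ j]
    exact norm_sub_le _ _
  have β2 : (∑' j : Λ₂, ‖(Φ₂ x₂₀ : ∀ _ : I₂, 𝕜) j‖)
      ≤ (∑' j : Λ₂, ‖(Φ₂ x₂s : ∀ _ : I₂, 𝕜) j‖)
        + (∑' j : Λ₂, ‖(Φ₂ h₂ : ∀ _ : I₂, 𝕜) j‖) := by
    rw [← Summable.tsum_add (S2 x₂s _) (S2 h₂ _)]
    refine Summable.tsum_le_tsum (fun j => ?_) (S2 x₂₀ _) ((S2 x₂s _).add (S2 h₂ _))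
    rw [e20, coe2 x₂s h₂ j]
    exact norm_sub_le _ _
  -- assemble
  rw [← split1 h₁, ← split2 h₂]
  rw [← split1 x₁s, ← split2 x₂s, ← split1 x₁₀, ← split2 x₂₀] at hmin'
  rw [← split1 h₁, ← split2 h₂] at hc
  have h2κ : (0:ℝ) < 1 - 2 * κ := by linarith
  rw [le_div_iff₀ h2κ]
  have n1 : (0:ℝ) ≤ ∑' j : Λ₁, ‖(Φ₁ h₁ : ∀ _ : I₁, 𝕜) j‖ := tsum_nonneg (fun _ => norm_nonneg _)
  have n2 : (0:ℝ) ≤ ∑' j : Λ₂, ‖(Φ₂ h₂ : ∀ _ : I₂, 𝕜) j‖ := tsum_nonneg (fun _ => norm_nonneg _)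
  have n3 : (0:ℝ) ≤ ∑' j : ↥Λ₁ᶜ, ‖(Φ₁ h₁ : ∀ _ : I₁, 𝕜) j‖ := tsum_nonneg (fun _ => norm_nonneg _)
  have n4 : (0:ℝ) ≤ ∑' j : ↥Λ₂ᶜ, ‖(Φ₂ h₂ : ∀ _ : I₂, 𝕜) j‖ := tsum_nonneg (fun _ => norm_nonneg _)
  nlinarith [hc, hmin', hsparse, α1, α2, β1, β2]
end

section
/- Let H = H_K ⊕ H_M be an orthogonal decomposition of a Hilbert space H with orthogonal projections P_K, P_M, and for i = 1,2 let Φᵢ : H → ℓ²(Iᵢ) be the analysis operator of a Parseval frame (a linear isometry into ℓ²) such that every coefficient sequence Φᵢ z appearing below is absolutely summable. Let Λ₁ ⊆ I₁, Λ₂ ⊆ I₂, and let 0 ≤ κ < 1 be a joint-concentration constant, i.e. for all x ∈ H and all y ∈ H_M: ‖𝟙_{Λ₁}Φ₁(y + P_K x)‖₁ + ‖𝟙_{Λ₂}Φ₂ x‖₁ ≤ κ(‖Φ₁(y + P_K x)‖₁ + ‖Φ₂ x‖₁). If x₁⁰, x₂⁰, x₁⋆, x₂⋆ ∈ H satisfy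 the constraint P_K(x₁⋆ + x₂⋆) = P_K(x₁⁰ + x₂⁰), then (1 − κ)(‖Φ₁(x₁⋆ − x₁⁰)‖₁ + ‖Φ₂(x₂⋆ − x₂⁰)‖₁) ≤ ‖𝟙_{Λ₁ᶜ}Φ₁(x₁⋆ − x₁⁰)‖₁ + ‖𝟙_{Λ₂ᶜ}Φ₂(x₂⋆ − x₂⁰)‖₁. -/
/-- Joint concentration with constant `κ < 1` plus the feasibility constraint
`P_K(x₁⋆ + x₂⋆) = P_K(x₁₀ + x₂₀)` give
`(1 − κ)(‖Φ₁(x₁⋆ − x₁₀)‖₁ + ‖Φ₂(x₂⋆ − x₂₀)‖₁)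
  ≤ ‖𝟙_{Λ₁ᶜ}Φ₁(x₁⋆ − x₁₀)‖₁ + ‖𝟙_{Λ₂ᶜ}Φ₂(x₂⋆ − x₂₀)‖₁`. -/
theorem joint_concentration_error_bound
    {𝕜 : Type*} [RCLike 𝕜]
    {H : Type*} [NormedAddCommGroup H] [InnerProductSpace 𝕜 H] [CompleteSpace H]
    (K : Submodule 𝕜 H) [CompleteSpace K]
    {I₁ I₂ : Type*}
    (Φ₁ : H →ₗᵢ[𝕜] lp (fun _ : I₁ => 𝕜) 2)
    (Φ₂ : H →ₗᵢ[𝕜] lp (fun _ : I₂ => 𝕜) 2)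
    (hsum₁ : ∀ z : H, Summable fun j : I₁ => ‖(Φ₁ z : ∀ _ : I₁, 𝕜) j‖)
    (hsum₂ : ∀ z : H, Summable fun j : I₂ => ‖(Φ₂ z : ∀ _ : I₂, 𝕜) j‖)
    (Λ₁ : Set I₁) (Λ₂ : Set I₂)
    (κ : ℝ) (hκ0 : 0 ≤ κ) (hκ : κ < 1)
    (hconc : ∀ x : H, ∀ y ∈ Kᗮ,
      (∑' j : Λ₁, ‖(Φ₁ (y + (K.orthogonalProjectionOnto x : H)) : ∀ _ : I₁, 𝕜) j‖)
          + (∑' j : Λ₂, ‖(Φ₂ x : ∀ _ : I₂, 𝕜) j‖)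
        ≤ κ * ((∑' j : I₁, ‖(Φ₁ (y + (K.orthogonalProjectionOnto x : H)) : ∀ _ : I₁, 𝕜) j‖)
          + (∑' j : I₂, ‖(Φ₂ x : ∀ _ : I₂, 𝕜) j‖)))
    (x₁₀ x₂₀ x₁s x₂s : H)
    (hfeas : (K.orthogonalProjectionOnto (x₁s + x₂s) : H)
      = (K.orthogonalProjectionOnto (x₁₀ + x₂₀) : H)) :
    (1 - κ) * ((∑' j : I₁, ‖(Φ₁ (x₁s - x₁₀) : ∀ _ : I₁, 𝕜) j‖)
        + (∑' j : I₂, ‖(Φ₂ (x₂s - x₂₀) : ∀ _ : I₂, 𝕜) j‖))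
      ≤ (∑' j : ↥Λ₁ᶜ, ‖(Φ₁ (x₁s - x₁₀) : ∀ _ : I₁, 𝕜) j‖)
        + (∑' j : ↥Λ₂ᶜ, ‖(Φ₂ (x₂s - x₂₀) : ∀ _ : I₂, 𝕜) j‖) := by
  set h₁ := x₁s - x₁₀ with hh₁
  set h₂ := x₂s - x₂₀ with hh₂
  have key : (K.orthogonalProjectionOnto h₁ : H) + (K.orthogonalProjectionOnto h₂ : H) = 0 := by
    have e : (K.orthogonalProjectionOnto h₁ : H) + (K.orthogonalProjectionOnto h₂ : H)
        = (K.orthogonalProjectionOnto (x₁s + x₂s) : H)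
          - (K.orthogonalProjectionOnto (x₁₀ + x₂₀) : H) := by
      simp only [hh₁, hh₂, map_sub, map_add, Submodule.coe_sub, Submodule.coe_add]
      abel
    rw [e, hfeas, sub_self]
  set y := h₁ - (K.orthogonalProjectionOnto h₁ : H) with hy
  have hyK : y ∈ Kᗮ := Submodule.sub_starProjection_mem_orthogonal (K := K) h₁
  have hx : y + (K.orthogonalProjectionOnto (-h₂) : H) = h₁ := by
    have : (K.orthogonalProjectionOnto (-h₂) : H) = (K.orthogonalProjectionOnto h₁ : H) := by
      have h' : (K.orthogonalProjectionOnto h₁ : H) = -(K.orthogonalProjectionOnto h₂ : H) :=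
        add_eq_zero_iff_eq_neg.mp key
      rw [map_neg, Submodule.coe_neg, h']
    rw [this, hy]; abel
  have spec := hconc (-h₂) y hyK
  rw [hx] at spec
  have hneg : ∀ j : I₂, ‖(Φ₂ (-h₂) : ∀ _ : I₂, 𝕜) j‖ = ‖(Φ₂ h₂ : ∀ _ : I₂, 𝕜) j‖ := by
    intro j; rw [map_neg]; simp
  simp only [hneg] at spec
  have split₁ := (hsum₁ h₁).tsum_subtype_add_tsum_subtype_compl Λ₁
  have split₂ := (hsum₂ h₂).tsum_subtype_add_tsum_subtype_compl Λ₂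
  have nn₁ : (0:ℝ) ≤ ∑' j : ↥Λ₁ᶜ, ‖(Φ₁ h₁ : ∀ _ : I₁, 𝕜) j‖ :=
    tsum_nonneg fun _ => norm_nonneg _
  have nn₂ : (0:ℝ) ≤ ∑' j : ↥Λ₂ᶜ, ‖(Φ₂ h₂ : ∀ _ : I₂, 𝕜) j‖ :=
    tsum_nonneg fun _ => norm_nonneg _
  nlinarith [spec, split₁, split₂]
end

section
/- Let H = H_K ⊕ H_M be an orthogonal decomposition of a Hilbert space H with orthogonal projections P_K, P_M, and for i = 1,2 let Φᵢ : H → ℓ²(Iᵢ) be the analysis operator of a Parseval frame (a linear isometry into ℓ²) such that every coefficient sequence Φᵢ z appearing below is absolutely summable. Let x⁰ = x₁⁰ + x₂⁰ ∈ H, let δ ≥ 0, and let Λ₁ ⊆ I₁, Λ₂ ⊆ I₂ satisfy the δ-sparsity condition ‖𝟙_{Λ₁ᶜ}Φ₁x₁⁰‖₁ + ‖𝟙_{Λ₂ᶜ}Φ₂x₂⁰‖₁ ≤ δ. Suppose (x₁⋆, x₂⋆) is a minimizer of ‖Φ₁x₁‖₁ + ‖Φ₂x₂‖₁ over all pairs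 (x₁, x₂) ∈ H × H satisfying P_K(x₁ + x₂) = P_K x⁰, i.e. P_K(x₁⋆ + x₂⋆) = P_K x⁰ and ‖Φ₁x₁⋆‖₁ + ‖Φ₂x₂⋆‖₁ ≤ ‖Φ₁x₁‖₁ + ‖Φ₂x₂‖₁ for every such pair. Then ‖𝟙_{Λ₁ᶜ}Φ₁x₁⋆‖₁ + ‖𝟙_{Λ₂ᶜ}Φ₂x₂⋆‖₁ ≤ δ + ‖𝟙_{Λ₁}Φ₁(x₁⋆ − x₁⁰)‖₁ + ‖𝟙_{Λ₂}Φ₂(x₂⋆ − x₂⁰)‖₁. -/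
/-- δ-sparsity of `(x₁₀, x₂₀)` and minimality of `(x₁⋆, x₂⋆)` yield
`‖𝟙_{Λ₁ᶜ}Φ₁x₁⋆‖₁ + ‖𝟙_{Λ₂ᶜ}Φ₂x₂⋆‖₁
  ≤ δ + ‖𝟙_{Λ₁}Φ₁(x₁⋆ − x₁₀)‖₁ + ‖𝟙_{Λ₂}Φ₂(x₂⋆ − x₂₀)‖₁`. -/
theorem minimizer_offsupport_bound
    {𝕜 : Type*} [RCLike 𝕜]
    {H : Type*} [NormedAddCommGroup H] [InnerProductSpace 𝕜 H] [CompleteSpace H]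
    (K : Submodule 𝕜 H) [CompleteSpace K]
    {I₁ I₂ : Type*}
    (Φ₁ : H →ₗᵢ[𝕜] lp (fun _ : I₁ => 𝕜) 2)
    (Φ₂ : H →ₗᵢ[𝕜] lp (fun _ : I₂ => 𝕜) 2)
    (hsum₁ : ∀ z : H, Summable fun j : I₁ => ‖(Φ₁ z : ∀ _ : I₁, 𝕜) j‖)
    (hsum₂ : ∀ z : H, Summable fun j : I₂ => ‖(Φ₂ z : ∀ _ : I₂, 𝕜) j‖)
    (x₀ x₁₀ x₂₀ : H) (hx : x₀ = x₁₀ + x₂₀)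
    (δ : ℝ) (hδ : 0 ≤ δ)
    (Λ₁ : Set I₁) (Λ₂ : Set I₂)
    (hsparse :
      (∑' j : ↥Λ₁ᶜ, ‖(Φ₁ x₁₀ : ∀ _ : I₁, 𝕜) j‖)
        + (∑' j : ↥Λ₂ᶜ, ‖(Φ₂ x₂₀ : ∀ _ : I₂, 𝕜) j‖) ≤ δ)
    (x₁s x₂s : H)
    (hfeas : (Submodule.orthogonalProjectionOnto K (x₁s + x₂s) : H) = (Submodule.orthogonalProjectionOnto K x₀ : H))
    (hmin : ∀ x₁ x₂ : H,
      (Submodule.orthogonalProjectionOnto K (x₁ + x₂) : H) = (Submodule.orthogonalProjectionOnto K x₀ : H) →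
      (∑' j : I₁, ‖(Φ₁ x₁s : ∀ _ : I₁, 𝕜) j‖) + (∑' j : I₂, ‖(Φ₂ x₂s : ∀ _ : I₂, 𝕜) j‖)
        ≤ (∑' j : I₁, ‖(Φ₁ x₁ : ∀ _ : I₁, 𝕜) j‖) + (∑' j : I₂, ‖(Φ₂ x₂ : ∀ _ : I₂, 𝕜) j‖)) :
    (∑' j : ↥Λ₁ᶜ, ‖(Φ₁ x₁s : ∀ _ : I₁, 𝕜) j‖) + (∑' j : ↥Λ₂ᶜ, ‖(Φ₂ x₂s : ∀ _ : I₂, 𝕜) j‖)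
      ≤ δ + (∑' j : Λ₁, ‖(Φ₁ (x₁s - x₁₀) : ∀ _ : I₁, 𝕜) j‖)
        + (∑' j : Λ₂, ‖(Φ₂ (x₂s - x₂₀) : ∀ _ : I₂, 𝕜) j‖) := by
  have key := hmin x₁₀ x₂₀ (by rw [hx])
  -- splitting lemmas
  have split₁ : ∀ z : H, (∑' j : I₁, ‖(Φ₁ z : ∀ _ : I₁, 𝕜) j‖)
      = (∑' j : Λ₁, ‖(Φ₁ z : ∀ _ : I₁, 𝕜) j‖) + (∑' j : ↥Λ₁ᶜ, ‖(Φ₁ z : ∀ _ : I₁, 𝕜) j‖) := by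
    intro z
    exact (Summable.tsum_add_tsum_compl ((hsum₁ z).subtype Λ₁) ((hsum₁ z).subtype Λ₁ᶜ)).symm
  have split₂ : ∀ z : H, (∑' j : I₂, ‖(Φ₂ z : ∀ _ : I₂, 𝕜) j‖)
      = (∑' j : Λ₂, ‖(Φ₂ z : ∀ _ : I₂, 𝕜) j‖) + (∑' j : ↥Λ₂ᶜ, ‖(Φ₂ z : ∀ _ : I₂, 𝕜) j‖) := by
    intro z
    exact (Summable.tsum_add_tsum_compl ((hsum₂ z).subtype Λ₂) ((hsum₂ z).subtype Λ₂ᶜ)).symm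
  -- triangle inequality on Λ₁, Λ₂
  have pt₁ : ∀ j : I₁, ‖(Φ₁ x₁s : ∀ _ : I₁, 𝕜) j‖
      ≤ ‖(Φ₁ x₁₀ : ∀ _ : I₁, 𝕜) j‖ + ‖(Φ₁ (x₁s - x₁₀) : ∀ _ : I₁, 𝕜) j‖ := by
    intro j
    have h : Φ₁ x₁s = Φ₁ x₁₀ + Φ₁ (x₁s - x₁₀) := by
      rw [← map_add]; congr 1; abel
    rw [h, lp.coeFn_add, Pi.add_apply]
    exact norm_add_le _ _
  have pt₂ : ∀ j : I₂, ‖(Φ₂ x₂s : ∀ _ : I₂, 𝕜) j‖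
      ≤ ‖(Φ₂ x₂₀ : ∀ _ : I₂, 𝕜) j‖ + ‖(Φ₂ (x₂s - x₂₀) : ∀ _ : I₂, 𝕜) j‖ := by
    intro j
    have h : Φ₂ x₂s = Φ₂ x₂₀ + Φ₂ (x₂s - x₂₀) := by
      rw [← map_add]; congr 1; abel
    rw [h, lp.coeFn_add, Pi.add_apply]
    exact norm_add_le _ _
  have tri₁ : (∑' j : Λ₁, ‖(Φ₁ x₁s : ∀ _ : I₁, 𝕜) j‖)
      ≤ (∑' j : Λ₁, ‖(Φ₁ x₁₀ : ∀ _ : I₁, 𝕜) j‖) + (∑' j : Λ₁, ‖(Φ₁ (x₁s - x₁₀) : ∀ _ : I₁, 𝕜) j‖) := by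
    refine le_trans (Summable.tsum_le_tsum (fun j => pt₁ j) ((hsum₁ x₁s).subtype Λ₁)
      (((hsum₁ x₁₀).subtype Λ₁).add ((hsum₁ (x₁s - x₁₀)).subtype Λ₁))) ?_
    exact le_of_eq (Summable.tsum_add ((hsum₁ x₁₀).subtype Λ₁) ((hsum₁ (x₁s - x₁₀)).subtype Λ₁))
  have tri₂ : (∑' j : Λ₂, ‖(Φ₂ x₂s : ∀ _ : I₂, 𝕜) j‖)
      ≤ (∑' j : Λ₂, ‖(Φ₂ x₂₀ : ∀ _ : I₂, 𝕜) j‖) + (∑' j : Λ₂, ‖(Φ₂ (x₂s - x₂₀) : ∀ _ : I₂, 𝕜) j‖) := by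
    refine le_trans (Summable.tsum_le_tsum (fun j => pt₂ j) ((hsum₂ x₂s).subtype Λ₂)
      (((hsum₂ x₂₀).subtype Λ₂).add ((hsum₂ (x₂s - x₂₀)).subtype Λ₂))) ?_
    exact le_of_eq (Summable.tsum_add ((hsum₂ x₂₀).subtype Λ₂) ((hsum₂ (x₂s - x₂₀)).subtype Λ₂))
  -- triangle: on-support part of x₀ vs xs (other direction)
  have pt₁' : ∀ j : I₁, ‖(Φ₁ x₁₀ : ∀ _ : I₁, 𝕜) j‖
      ≤ ‖(Φ₁ x₁s : ∀ _ : I₁, 𝕜) j‖ + ‖(Φ₁ (x₁s - x₁₀) : ∀ _ : I₁, 𝕜) j‖ := by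
    intro j
    have h : Φ₁ x₁₀ = Φ₁ x₁s + Φ₁ (x₁₀ - x₁s) := by
      rw [← map_add]; congr 1; abel
    have hn : ‖(Φ₁ (x₁₀ - x₁s) : ∀ _ : I₁, 𝕜) j‖ = ‖(Φ₁ (x₁s - x₁₀) : ∀ _ : I₁, 𝕜) j‖ := by
      have : Φ₁ (x₁₀ - x₁s) = -Φ₁ (x₁s - x₁₀) := by rw [← map_neg]; congr 1; abel
      rw [this, lp.coeFn_neg, Pi.neg_apply, norm_neg]
    rw [h, lp.coeFn_add, Pi.add_apply, ← hn]
    exact norm_add_le _ _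
  have pt₂' : ∀ j : I₂, ‖(Φ₂ x₂₀ : ∀ _ : I₂, 𝕜) j‖
      ≤ ‖(Φ₂ x₂s : ∀ _ : I₂, 𝕜) j‖ + ‖(Φ₂ (x₂s - x₂₀) : ∀ _ : I₂, 𝕜) j‖ := by
    intro j
    have h : Φ₂ x₂₀ = Φ₂ x₂s + Φ₂ (x₂₀ - x₂s) := by
      rw [← map_add]; congr 1; abel
    have hn : ‖(Φ₂ (x₂₀ - x₂s) : ∀ _ : I₂, 𝕜) j‖ = ‖(Φ₂ (x₂s - x₂₀) : ∀ _ : I₂, 𝕜) j‖ := by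
      have : Φ₂ (x₂₀ - x₂s) = -Φ₂ (x₂s - x₂₀) := by rw [← map_neg]; congr 1; abel
      rw [this, lp.coeFn_neg, Pi.neg_apply, norm_neg]
    rw [h, lp.coeFn_add, Pi.add_apply, ← hn]
    exact norm_add_le _ _
  have tri₁' : (∑' j : Λ₁, ‖(Φ₁ x₁₀ : ∀ _ : I₁, 𝕜) j‖)
      ≤ (∑' j : Λ₁, ‖(Φ₁ x₁s : ∀ _ : I₁, 𝕜) j‖) + (∑' j : Λ₁, ‖(Φ₁ (x₁s - x₁₀) : ∀ _ : I₁, 𝕜) j‖) := by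
    refine le_trans (Summable.tsum_le_tsum (fun j => pt₁' j) ((hsum₁ x₁₀).subtype Λ₁)
      (((hsum₁ x₁s).subtype Λ₁).add ((hsum₁ (x₁s - x₁₀)).subtype Λ₁))) ?_
    exact le_of_eq (Summable.tsum_add ((hsum₁ x₁s).subtype Λ₁) ((hsum₁ (x₁s - x₁₀)).subtype Λ₁))
  have tri₂' : (∑' j : Λ₂, ‖(Φ₂ x₂₀ : ∀ _ : I₂, 𝕜) j‖)
      ≤ (∑' j : Λ₂, ‖(Φ₂ x₂s : ∀ _ : I₂, 𝕜) j‖) + (∑' j : Λ₂, ‖(Φ₂ (x₂s - x₂₀) : ∀ _ : I₂, 𝕜) j‖) := by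
    refine le_trans (Summable.tsum_le_tsum (fun j => pt₂' j) ((hsum₂ x₂₀).subtype Λ₂)
      (((hsum₂ x₂s).subtype Λ₂).add ((hsum₂ (x₂s - x₂₀)).subtype Λ₂))) ?_
    exact le_of_eq (Summable.tsum_add ((hsum₂ x₂s).subtype Λ₂) ((hsum₂ (x₂s - x₂₀)).subtype Λ₂))
  rw [split₁ x₁s, split₂ x₂s, split₁ x₁₀, split₂ x₂₀] at key
  linarith
end

section
/- Let H = H_K ⊕ H_M be an orthogonal decomposition of a Hilbert space H with orthogonal projections P_K, P_M, and for i = 1,2 let Φᵢ : H → ℓ²(Iᵢ) be the analysis operator of a Parseval frame (a linear isometry into ℓ²) such that every coefficient sequence Φᵢ z appearing below is absolutely summable. Let x⁰ = x₁⁰ + x₂⁰ ∈ H, let δ ≥ 0, and let Λ₁ ⊆ I₁, Λ₂ ⊆ I₂ satisfy the δ-sparsity condition ‖𝟙_{Λ₁ᶜ}Φ₁x₁⁰‖₁ + ‖𝟙_{Λ₂ᶜ}Φ₂x₂⁰‖₁ ≤ δ. Let 0 ≤ κ < 1 be a joint-concentration constant, i.e. for all x ∈ H and all y ∈ H_M: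 ‖𝟙_{Λ₁}Φ₁(y + P_K x)‖₁ + ‖𝟙_{Λ₂}Φ₂ x‖₁ ≤ κ(‖Φ₁(y + P_K x)‖₁ + ‖Φ₂ x‖₁). If x₁⋆, x₂⋆ ∈ H satisfy the constraint P_K(x₁⋆ + x₂⋆) = P_K x⁰, then ‖Φ₁(x₁⋆ − x₁⁰)‖₁ + ‖Φ₂(x₂⋆ − x₂⁰)‖₁ ≤ (1/(1 − κ)) (‖𝟙_{Λ₁ᶜ}Φ₁x₁⋆‖₁ + ‖𝟙_{Λ₂ᶜ}Φ₂x₂⋆‖₁ + δ). -/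
/-- δ-sparsity, joint concentration with constant `κ < 1`, and feasibility
`P_K(x₁⋆ + x₂⋆) = P_K x₀` give
`‖Φ₁(x₁⋆ − x₁₀)‖₁ + ‖Φ₂(x₂⋆ − x₂₀)‖₁
  ≤ (1/(1 − κ))(‖𝟙_{Λ₁ᶜ}Φ₁x₁⋆‖₁ + ‖𝟙_{Λ₂ᶜ}Φ₂x₂⋆‖₁ + δ)`. -/
theorem feasible_error_bound
    {𝕜 : Type*} [RCLike 𝕜]
    {H : Type*} [NormedAddCommGroup H] [InnerProductSpace 𝕜 H] [CompleteSpace H]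
    (K : Submodule 𝕜 H) [CompleteSpace K]
    {I₁ I₂ : Type*}
    (Φ₁ : H →ₗᵢ[𝕜] lp (fun _ : I₁ => 𝕜) 2)
    (Φ₂ : H →ₗᵢ[𝕜] lp (fun _ : I₂ => 𝕜) 2)
    (hsum₁ : ∀ z : H, Summable fun j : I₁ => ‖(Φ₁ z : ∀ _ : I₁, 𝕜) j‖)
    (hsum₂ : ∀ z : H, Summable fun j : I₂ => ‖(Φ₂ z : ∀ _ : I₂, 𝕜) j‖)
    (x₀ x₁₀ x₂₀ : H) (hx : x₀ = x₁₀ + x₂₀)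
    (δ : ℝ) (hδ : 0 ≤ δ)
    (Λ₁ : Set I₁) (Λ₂ : Set I₂)
    (hsparse :
      (∑' j : ↥Λ₁ᶜ, ‖(Φ₁ x₁₀ : ∀ _ : I₁, 𝕜) j‖)
        + (∑' j : ↥Λ₂ᶜ, ‖(Φ₂ x₂₀ : ∀ _ : I₂, 𝕜) j‖) ≤ δ)
    (κ : ℝ) (hκ0 : 0 ≤ κ) (hκ : κ < 1)
    (hconc : ∀ x : H, ∀ y ∈ Kᗮ,
      (∑' j : Λ₁, ‖(Φ₁ (y + (K.orthogonalProjection x : H)) : ∀ _ : I₁, 𝕜) j‖)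
          + (∑' j : Λ₂, ‖(Φ₂ x : ∀ _ : I₂, 𝕜) j‖)
        ≤ κ * ((∑' j : I₁, ‖(Φ₁ (y + (K.orthogonalProjection x : H)) : ∀ _ : I₁, 𝕜) j‖)
          + (∑' j : I₂, ‖(Φ₂ x : ∀ _ : I₂, 𝕜) j‖)))
    (x₁s x₂s : H)
    (hfeas : (K.orthogonalProjection (x₁s + x₂s) : H) = (K.orthogonalProjection x₀ : H)) :
    (∑' j : I₁, ‖(Φ₁ (x₁s - x₁₀) : ∀ _ : I₁, 𝕜) j‖)
        + (∑' j : I₂, ‖(Φ₂ (x₂s - x₂₀) : ∀ _ : I₂, 𝕜) j‖)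
      ≤ (1 / (1 - κ)) * ((∑' j : ↥Λ₁ᶜ, ‖(Φ₁ x₁s : ∀ _ : I₁, 𝕜) j‖)
          + (∑' j : ↥Λ₂ᶜ, ‖(Φ₂ x₂s : ∀ _ : I₂, 𝕜) j‖) + δ) := by
  classical
  set u := x₁s - x₁₀ with hu
  set v := x₂s - x₂₀ with hv
  have h1κ : (0:ℝ) < 1 - κ := by linarith
  -- feasibility: projection of u + v is zero
  have hPuv : K.orthogonalProjection (u + v) = 0 := by
    have h1 : K.orthogonalProjection (x₁s + x₂s) = K.orthogonalProjection x₀ :=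
      Subtype.coe_injective hfeas
    have h2 : u + v = (x₁s + x₂s) - x₀ := by rw [hx, hu, hv]; abel
    rw [h2, map_sub, h1, sub_self]
  have huv : u + v ∈ Kᗮ := Submodule.orthogonalProjectionOnto_eq_zero_iff.mp hPuv
  -- the good decomposition
  have hy : u + (K.orthogonalProjection v : H) ∈ Kᗮ := by
    have h3 : u + (K.orthogonalProjection v : H)
        = (u + v) - (v - (K.orthogonalProjection v : H)) := by abel
    rw [h3]
    exact Submodule.sub_mem _ huv (K.sub_starProjection_mem_orthogonal v)
  have hconc' := hconc (-v) (u + (K.orthogonalProjection v : H)) hy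
  have harg : u + (K.orthogonalProjection v : H)
      + (K.orthogonalProjection (-v) : H) = u := by
    rw [map_neg]
    push_cast
    abel
  rw [harg] at hconc'
  have hnegv : ∀ j : I₂, ‖(Φ₂ (-v) : ∀ _ : I₂, 𝕜) j‖ = ‖(Φ₂ v : ∀ _ : I₂, 𝕜) j‖ := by
    intro j
    rw [map_neg, lp.coeFn_neg, Pi.neg_apply, norm_neg]
  simp only [hnegv] at hconc'
  -- splitting the sums
  have hsplit₁ : (∑' j : Λ₁, ‖(Φ₁ u : ∀ _ : I₁, 𝕜) j‖)
      + (∑' j : ↥Λ₁ᶜ, ‖(Φ₁ u : ∀ _ : I₁, 𝕜) j‖)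
      = ∑' j : I₁, ‖(Φ₁ u : ∀ _ : I₁, 𝕜) j‖ :=
    Summable.tsum_add_tsum_compl ((hsum₁ u).subtype _) ((hsum₁ u).subtype _)
  have hsplit₂ : (∑' j : Λ₂, ‖(Φ₂ v : ∀ _ : I₂, 𝕜) j‖)
      + (∑' j : ↥Λ₂ᶜ, ‖(Φ₂ v : ∀ _ : I₂, 𝕜) j‖)
      = ∑' j : I₂, ‖(Φ₂ v : ∀ _ : I₂, 𝕜) j‖ :=
    Summable.tsum_add_tsum_compl ((hsum₂ v).subtype _) ((hsum₂ v).subtype _)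
  -- triangle inequalities off the support
  have htri₁ : (∑' j : ↥Λ₁ᶜ, ‖(Φ₁ u : ∀ _ : I₁, 𝕜) j‖)
      ≤ (∑' j : ↥Λ₁ᶜ, ‖(Φ₁ x₁s : ∀ _ : I₁, 𝕜) j‖)
        + (∑' j : ↥Λ₁ᶜ, ‖(Φ₁ x₁₀ : ∀ _ : I₁, 𝕜) j‖) := by
    have ha : Summable fun j : ↥Λ₁ᶜ => ‖(Φ₁ x₁s : ∀ _ : I₁, 𝕜) j‖ := (hsum₁ x₁s).subtype _
    have hb : Summable fun j : ↥Λ₁ᶜ => ‖(Φ₁ x₁₀ : ∀ _ : I₁, 𝕜) j‖ := (hsum₁ x₁₀).subtype _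
    rw [← Summable.tsum_add ha hb]
    refine Summable.tsum_le_tsum ?_ ((hsum₁ u).subtype _)
      (((hsum₁ x₁s).subtype _).add ((hsum₁ x₁₀).subtype _))
    intro j
    have h4 : (Φ₁ u : ∀ _ : I₁, 𝕜) j
        = (Φ₁ x₁s : ∀ _ : I₁, 𝕜) j - (Φ₁ x₁₀ : ∀ _ : I₁, 𝕜) j := by
      rw [hu, map_sub, lp.coeFn_sub, Pi.sub_apply]
    rw [h4]
    exact norm_sub_le _ _
  have htri₂ : (∑' j : ↥Λ₂ᶜ, ‖(Φ₂ v : ∀ _ : I₂, 𝕜) j‖)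
      ≤ (∑' j : ↥Λ₂ᶜ, ‖(Φ₂ x₂s : ∀ _ : I₂, 𝕜) j‖)
        + (∑' j : ↥Λ₂ᶜ, ‖(Φ₂ x₂₀ : ∀ _ : I₂, 𝕜) j‖) := by
    have ha : Summable fun j : ↥Λ₂ᶜ => ‖(Φ₂ x₂s : ∀ _ : I₂, 𝕜) j‖ := (hsum₂ x₂s).subtype _
    have hb : Summable fun j : ↥Λ₂ᶜ => ‖(Φ₂ x₂₀ : ∀ _ : I₂, 𝕜) j‖ := (hsum₂ x₂₀).subtype _
    rw [← Summable.tsum_add ha hb]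
    refine Summable.tsum_le_tsum ?_ ((hsum₂ v).subtype _)
      (((hsum₂ x₂s).subtype _).add ((hsum₂ x₂₀).subtype _))
    intro j
    have h4 : (Φ₂ v : ∀ _ : I₂, 𝕜) j
        = (Φ₂ x₂s : ∀ _ : I₂, 𝕜) j - (Φ₂ x₂₀ : ∀ _ : I₂, 𝕜) j := by
      rw [hv, map_sub, lp.coeFn_sub, Pi.sub_apply]
    rw [h4]
    exact norm_sub_le _ _
  -- final algebra
  rw [one_div, inv_mul_eq_div, le_div_iff₀ h1κ]
  nlinarith [hconc', hsplit₁, hsplit₂, htri₁, htri₂, hsparse]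
end
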